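/- arXiv:0807.0245 — 2 statements merged into one kernel-verified Lean document; each statement's English description precedes it below -/
import Mathlib

section
/- Let L and K be positive integers. There exists a real constant C > 0, depending only on L and K, such that for every nonzero α ∈ ℂ^L and every index k ∈ {1, …, K}, the kth diagonal entry of (T(α,L,K)ᴴ T(α,L,K))^{-1} is a positive real number satisfying ([(T(α,L,K)ᴴ T(α,L,K))^{-1}]_{kk})^{-1} ≥ C·‖α‖². -/
/-!
The columns of `T(α)` are shifts of `α`, so `T(α) x` is the convolution of `α` and `x`; comparing
lowest-order nonzero terms shows that `T(α)` is injective for `α ≠ 0`. Hence `G(α) = T(α)ᴴ T(α)` is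
positive definite and the diagonal of `G(α)⁻¹` is positive. Since `G(c α) = |c|² G(α)`, the entries
of `G(α)⁻¹` are homogeneous of degree `-2`, so it suffices to bound them on the unit sphere. There
they are dominated by the trace of `G(α)⁻¹`, a continuous function on the compact sphere.
-/

open Matrix

/-- The `(K+L−1) × K` Toeplitz matrix generated by `α ∈ ℂ^L`: its `(i,j)` entry (0-based)
is `α (i−j)` when `0 ≤ i−j ≤ L−1` and `0` otherwise. -/
noncomputable def Toep (L K : ℕ) (α : Fin L → ℂ) : Matrix (Fin (K + L - 1)) (Fin K) ℂ :=
  Matrix.of fun i j =>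
    if h : (j : ℕ) ≤ (i : ℕ) ∧ (i : ℕ) - (j : ℕ) < L
    then α ⟨(i : ℕ) - (j : ℕ), h.2⟩ else 0

open ComplexOrder

theorem exists_ne_zero_forall_lt_eq_zero {ι M : Type*} [LinearOrder ι] [WellFoundedLT ι]
    [Zero M] {f : ι → M} (hf : f ≠ 0) : ∃ m, f m ≠ 0 ∧ ∀ i < m, f i = 0 := by
  obtain ⟨i, hi⟩ := Function.ne_iff.mp hf
  obtain ⟨m, hm, hmin⟩ := wellFounded_lt.has_min {i | f i ≠ 0} ⟨i, hi⟩
  exact ⟨m, hm, fun i hi => not_not.mp fun h => hmin i h hi⟩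

theorem Matrix.PosSemidef.re_diag_le_re_trace {n : Type*} [Fintype n] {A : Matrix n n ℂ} (hA : A.PosSemidef)
    (i : n) : (A i i).re ≤ A.trace.re := by
  rw [trace, Complex.re_sum]
  exact Finset.single_le_sum (fun j _ => (Complex.nonneg_iff.mp (hA.diag_nonneg (i := j))).1)
    (Finset.mem_univ i)

section Toeplitz

variable {L K : ℕ}

theorem toep_mulVec_eq_zero {α : Fin L → ℂ} (hα : α ≠ 0) {x : Fin K → ℂ}
    (hx : Toep L K α *ᵥ x = 0) : x = 0 := by
  by_contra hx0
  obtain ⟨m, hαm, hαmin⟩ := exists_ne_zero_forall_lt_eq_zero hα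
  obtain ⟨j, hxj, hxmin⟩ := exists_ne_zero_forall_lt_eq_zero hx0
  -- in row `m + j` the only nonzero term is `α m * x j`
  have hrow := congrFun hx ⟨(m : ℕ) + j, by omega⟩
  rw [mulVec, dotProduct, Finset.sum_eq_single j] at hrow
  · have hcond : (j : ℕ) ≤ m + j ∧ (m : ℕ) + j - j < L := ⟨by omega, by omega⟩
    simp only [Toep, of_apply, dif_pos hcond] at hrow
    exact hxj ((mul_eq_zero.mp hrow).resolve_left (by simpa using hαm))
  · intro b _ hbj
    rcases lt_or_gt_of_ne hbj with hb | hb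
    · rw [hxmin b hb, mul_zero]
    · simp only [Toep, of_apply]
      split_ifs with hc
      · rw [hαmin _ (Fin.lt_def.mpr (by simp; omega)), zero_mul]
      · rw [zero_mul]
  · simp

theorem toep_mulVec_injective {α : Fin L → ℂ} (hα : α ≠ 0) :
    Function.Injective (Toep L K α).mulVec := fun x y h =>
  sub_eq_zero.mp (toep_mulVec_eq_zero hα (by rw [mulVec_sub, h, sub_self]))

theorem posDef_toep_gram {α : Fin L → ℂ} (hα : α ≠ 0) : ((Toep L K α)ᴴ * Toep L K α).PosDef :=
  .conjTranspose_mul_self _ (toep_mulVec_injective hα)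

theorem isUnit_det_toep_gram {α : Fin L → ℂ} (hα : α ≠ 0) :
    IsUnit ((Toep L K α)ᴴ * Toep L K α).det :=
  (isUnit_iff_isUnit_det _).mp (posDef_toep_gram hα).isUnit

theorem inv_toep_gram_diag_pos {α : Fin L → ℂ} (hα : α ≠ 0) (k : Fin K) :
    0 < (((Toep L K α)ᴴ * Toep L K α)⁻¹ k k) :=
  (posDef_toep_gram hα).inv.diag_pos

theorem toep_smul (c : ℂ) (α : Fin L → ℂ) : Toep L K (c • α) = c • Toep L K α := by
  ext i j
  simp only [Toep, of_apply, Matrix.smul_apply, Pi.smul_apply, smul_eq_mul]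
  split_ifs <;> simp

theorem inv_toep_gram_smul {α : Fin L → ℂ} (hα : α ≠ 0) {c : ℂ} (hc : c ≠ 0) :
    ((Toep L K (c • α))ᴴ * Toep L K (c • α))⁻¹
      = (star c * c)⁻¹ • ((Toep L K α)ᴴ * Toep L K α)⁻¹ := by
  have := invertibleOfNonzero (mul_ne_zero (star_ne_zero.mpr hc) hc)
  rw [toep_smul, conjTranspose_smul, Matrix.smul_mul, Matrix.mul_smul, smul_smul,
    Matrix.inv_smul _ _ (isUnit_det_toep_gram hα), invOf_eq_inv]

theorem re_inv_toep_gram_ofReal_smul_apply {α : Fin L → ℂ} (hα : α ≠ 0) {r : ℝ} (hr : r ≠ 0)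
    (k : Fin K) :
    (((Toep L K ((r : ℂ) • α))ᴴ * Toep L K ((r : ℂ) • α))⁻¹ k k).re
      = (r ^ 2)⁻¹ * (((Toep L K α)ᴴ * Toep L K α)⁻¹ k k).re := by
  rw [inv_toep_gram_smul hα (Complex.ofReal_ne_zero.mpr hr), Complex.star_def,
    Complex.conj_ofReal, ← sq, ← Complex.ofReal_pow, ← Complex.ofReal_inv, Matrix.smul_apply,
    smul_eq_mul, Complex.re_ofReal_mul]

theorem continuous_toep : Continuous (Toep L K) := by
  refine continuous_pi fun i => continuous_pi fun j => ?_
  simp only [Toep, of_apply]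
  split_ifs
  · exact continuous_apply _
  · exact continuous_const

theorem continuousOn_inv_toep_gram :
    ContinuousOn (fun α : Fin L → ℂ => ((Toep L K α)ᴴ * Toep L K α)⁻¹) {α | α ≠ 0} := by
  intro α hα
  have hgram : Continuous fun α : Fin L → ℂ => (Toep L K α)ᴴ * Toep L K α :=
    continuous_toep.matrix_conjTranspose.matrix_mul continuous_toep
  refine ((continuousAt_matrix_inv _ ?_).comp hgram.continuousAt).continuousWithinAt
  exact NormedRing.inverse_continuousAt (isUnit_det_toep_gram hα).unit

theorem bddAbove_re_trace_inv_toep_gram_sphere :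
    BddAbove ((fun u : EuclideanSpace ℂ (Fin L) =>
      (((Toep L K u)ᴴ * Toep L K u)⁻¹).trace.re) '' Metric.sphere 0 1) := by
  have hS : Set.MapsTo WithLp.ofLp (Metric.sphere (0 : EuclideanSpace ℂ (Fin L)) 1)
      {α | α ≠ 0} := fun u hu =>
    (WithLp.ofLp_eq_zero 2).not.mpr (ne_zero_of_mem_unit_sphere ⟨u, hu⟩)
  exact (isCompact_sphere _ _).bddAbove_image <|
    Complex.continuous_re.comp_continuousOn <| continuous_id.matrix_trace.comp_continuousOn <|
      continuousOn_inv_toep_gram.comp (PiLp.continuous_ofLp 2 _).continuousOn hS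

end Toeplitz

theorem stmt8_general (L K : ℕ) :
    ∃ C : ℝ, 0 < C ∧
      ∀ α : EuclideanSpace ℂ (Fin L), α ≠ 0 → ∀ k : Fin K,
        0 < (((Toep L K α)ᴴ * Toep L K α)⁻¹ k k).re ∧
        (((Toep L K α)ᴴ * Toep L K α)⁻¹ k k).im = 0 ∧
        C * ‖α‖ ^ 2 ≤ ((((Toep L K α)ᴴ * Toep L K α)⁻¹ k k).re)⁻¹ := by
  obtain ⟨M, hM⟩ := bddAbove_re_trace_inv_toep_gram_sphere (L := L) (K := K)
  refine ⟨(max M 1)⁻¹, by positivity, fun α hα k => ?_⟩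
  obtain ⟨hre, him⟩ := Complex.pos_iff.mp
    (inv_toep_gram_diag_pos ((WithLp.ofLp_eq_zero 2).not.mpr hα) k)
  refine ⟨hre, him.symm, ?_⟩
  have hr : 0 < ‖α‖ := norm_pos_iff.mpr hα
  set u : EuclideanSpace ℂ (Fin L) := (‖α‖⁻¹ : ℂ) • α
  have hu : u ∈ Metric.sphere 0 1 := by simp [u, norm_smul, hr.ne']
  have hu0 : u.ofLp ≠ 0 := (WithLp.ofLp_eq_zero 2).not.mpr (ne_zero_of_mem_unit_sphere ⟨u, hu⟩)
  have hαu : α.ofLp = (‖α‖ : ℂ) • u.ofLp := by simp [u, smul_smul, hr.ne']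
  have hupos := (Complex.pos_iff.mp (inv_toep_gram_diag_pos hu0 k)).1
  have hubound : (((Toep L K u)ᴴ * Toep L K u)⁻¹ k k).re ≤ max M 1 :=
    ((posDef_toep_gram hu0).inv.posSemidef.re_diag_le_re_trace k).trans
      ((hM ⟨u, hu, rfl⟩).trans (le_max_left _ _))
  rw [hαu, re_inv_toep_gram_ofReal_smul_apply hu0 hr.ne', mul_inv, inv_inv, mul_comm]
  gcongr

/-- There is a constant `C > 0`, depending only on `L` and `K`, such that
for every nonzero `α` and every `k`, the `k`-th diagonal entry of
`(T(α,L,K)ᴴ T(α,L,K))⁻¹` is a positive real whose inverse is at least `C ‖α‖²`. -/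
theorem stmt8 (L K : ℕ) (hL : 0 < L) (hK : 0 < K) :
    ∃ C : ℝ, 0 < C ∧
      ∀ α : EuclideanSpace ℂ (Fin L), α ≠ 0 → ∀ k : Fin K,
        0 < (((Toep L K α)ᴴ * Toep L K α)⁻¹ k k).re ∧
        (((Toep L K α)ᴴ * Toep L K α)⁻¹ k k).im = 0 ∧
        C * ‖α‖ ^ 2 ≤ ((((Toep L K α)ᴴ * Toep L K α)⁻¹ k k).re)⁻¹ :=
  stmt8_general L K
end

section
/- Let N, M, L be positive integers and let A_1, …, A_L be complex N×M matrices such that for every nonzero h ∈ ℂ^M the Gram matrix H(h)ᴴH(h) is nonsingular. Let Σ be an M×M Hermitian positive definite complex matrix and fix ℓ ∈ {1, …, L}. For h ≠ 0 let q_ℓ(h) = ([(H(h)ᴴH(h))^{-1}]_{ℓℓ})^{-1}, a positive real. Then there exists a constant C > 0 such that for every a > 0, ∫_{ℂ^M} exp(−a·q_ℓ(h)) · (π^M det Σ)^{-1} exp(−hᴴΣ^{-1}h) dh ≤ C·a^{-M}, the integral being with respect to Lebesgue measure on ℂ^M (the integrand being defined arbitrarily at h = 0). -/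
/-!
Since `H(h)` is linear in `h`, the zero-forcing SNR `q(h) = 1 / [(H(h)ᴴH(h))⁻¹]_{ℓℓ}` is
homogeneous of degree two; it is also positive and continuous on `h ≠ 0`, so its minimum `c > 0`
on the unit sphere gives `q(h) ≥ c‖h‖²`. The Gaussian density is at most `(π^M det Σ)⁻¹`, so the
integral is bounded by `(π^M det Σ)⁻¹ ∫ exp(-a c ‖h‖²) dh`, a Gaussian integral over
`ℂ^M ≅ ℝ^{2M}`, which scales like `a^{-M}`.
-/

open Matrix MeasureTheory ComplexOrder

/-- `Hmat A h` is the `N × L` matrix whose `ℓ`-th column is `A ℓ *ᵥ h`. -/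
noncomputable def Hmat {N M L : ℕ} (A : Fin L → Matrix (Fin N) (Fin M) ℂ)
    (h : Fin M → ℂ) : Matrix (Fin N) (Fin L) ℂ :=
  Matrix.of fun n l => (A l).mulVec h n

theorem Matrix.posDef_conjTranspose_mul_self_of_det_ne_zero {m n K : Type*} [Fintype m]
    [Fintype n] [DecidableEq n] [Field K] [StarRing K] [PartialOrder K] [StarOrderedRing K]
    (B : Matrix m n K) (hB : (Bᴴ * B).det ≠ 0) : (Bᴴ * B).PosDef := by
  refine .conjTranspose_mul_self B (Function.Injective.of_comp (f := Bᴴ.mulVec) ?_)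
  simpa only [Function.comp_def, mulVec_mulVec] using
    mulVec_injective_iff_isUnit.mpr ((isUnit_iff_isUnit_det _).mpr hB.isUnit)

theorem exists_pos_mul_norm_pow_le_of_homogeneous {E : Type*} [NormedAddCommGroup E]
    [NormedSpace ℝ E] [ProperSpace E] [Nontrivial E] {Q : E → ℝ} {k : ℕ}
    (hcont : ContinuousOn Q {0}ᶜ) (hpos : ∀ x, x ≠ 0 → 0 < Q x)
    (hhom : ∀ r : ℝ, 0 < r → ∀ x, x ≠ 0 → Q (r • x) = r ^ k * Q x) :
    ∃ c, 0 < c ∧ ∀ x, x ≠ 0 → c * ‖x‖ ^ k ≤ Q x := by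
  have hsphere : Metric.sphere (0 : E) 1 ⊆ {0}ᶜ := by
    simp +contextual [Set.subset_def, ← norm_pos_iff]
  obtain ⟨z, hz, hmin⟩ := (isCompact_sphere (0 : E) 1).exists_isMinOn
    (NormedSpace.sphere_nonempty.mpr zero_le_one) (hcont.mono hsphere)
  refine ⟨Q z, hpos z (hsphere hz), fun x hx => ?_⟩
  have hnx : 0 < ‖x‖ := norm_pos_iff.mpr hx
  have hu : ‖x‖⁻¹ • x ∈ Metric.sphere (0 : E) 1 := by
    simp [norm_smul, hnx.ne']
  calc Q z * ‖x‖ ^ k ≤ Q (‖x‖⁻¹ • x) * ‖x‖ ^ k := by gcongr; exact hmin hu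
    _ = Q x := by
      rw [mul_comm, ← hhom ‖x‖ hnx _ (hsphere hu), smul_smul, mul_inv_cancel₀ hnx.ne', one_smul]

theorem integral_exp_neg_mul_sq_norm_complex {b : ℝ} (hb : 0 < b) :
    ∫ z : ℂ, Real.exp (-b * ‖z‖ ^ 2) = Real.pi / b := by
  simpa [Complex.finrank_real_complex] using
    GaussianFourier.integral_rexp_neg_mul_sq_norm (V := ℂ) hb

theorem integral_exp_neg_mul_sum_sq_norm {ι : Type*} [Fintype ι] {b : ℝ} (hb : 0 < b) :
    ∫ h : ι → ℂ, Real.exp (-b * ∑ i, ‖h i‖ ^ 2) = (Real.pi / b) ^ Fintype.card ι := by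
  simp_rw [neg_mul, Finset.mul_sum, ← Finset.sum_neg_distrib, Real.exp_sum, ← neg_mul]
  rw [integral_fintype_prod_volume_eq_pow (fun z : ℂ => Real.exp (-b * ‖z‖ ^ 2)),
    integral_exp_neg_mul_sq_norm_complex hb]

theorem integrable_exp_neg_mul_sum_sq_norm {ι : Type*} [Fintype ι] {b : ℝ} (hb : 0 < b) :
    Integrable fun h : ι → ℂ => Real.exp (-b * ∑ i, ‖h i‖ ^ 2) :=
  .of_integral_ne_zero (by rw [integral_exp_neg_mul_sum_sq_norm hb]; positivity)

noncomputable def zfSNR {N M L : ℕ} (A : Fin L → Matrix (Fin N) (Fin M) ℂ) (ℓ : Fin L)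
    (h : Fin M → ℂ) : ℝ :=
  ((((Hmat A h)ᴴ * Hmat A h)⁻¹ ℓ ℓ).re)⁻¹

section zfSNR

variable {N M L : ℕ} (A : Fin L → Matrix (Fin N) (Fin M) ℂ) (ℓ : Fin L)

theorem Hmat_smul (r : ℝ) (h : Fin M → ℂ) : Hmat A (r • h) = r • Hmat A h := by
  ext n l
  simp [Hmat, mulVec_smul]

theorem continuous_Hmat : Continuous (Hmat A) :=
  continuous_matrix fun n l => by unfold Hmat; fun_prop

theorem zfSNR_smul (r : ℝ) (hr : r ≠ 0) (h : Fin M → ℂ)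
    (hdet : ((Hmat A h)ᴴ * Hmat A h).det ≠ 0) :
    zfSNR A ℓ (r • h) = r ^ 2 * zfSNR A ℓ h := by
  have hgram : (Hmat A (r • h))ᴴ * Hmat A (r • h) = (r ^ 2) • ((Hmat A h)ᴴ * Hmat A h) := by
    rw [Hmat_smul, conjTranspose_smul, star_trivial, Matrix.smul_mul, Matrix.mul_smul, smul_smul,
      sq]
  have hinv : ((Hmat A (r • h))ᴴ * Hmat A (r • h))⁻¹ =
      (r ^ 2)⁻¹ • ((Hmat A h)ᴴ * Hmat A h)⁻¹ := by
    refine inv_eq_left_inv ?_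
    rw [hgram, Matrix.smul_mul, Matrix.mul_smul, smul_smul, nonsing_inv_mul _ hdet.isUnit,
      inv_mul_cancel₀ (pow_ne_zero 2 hr), one_smul]
  rw [zfSNR, zfSNR, hinv, Matrix.smul_apply, Complex.smul_re, smul_eq_mul, mul_inv, inv_inv]

theorem re_inv_gram_Hmat_pos {h : Fin M → ℂ} (hdet : ((Hmat A h)ᴴ * Hmat A h).det ≠ 0) :
    0 < (((Hmat A h)ᴴ * Hmat A h)⁻¹ ℓ ℓ).re :=
  (Complex.pos_iff.mp (posDef_conjTranspose_mul_self_of_det_ne_zero _ hdet).inv.diag_pos).1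

theorem continuousAt_zfSNR {h : Fin M → ℂ} (hdet : ((Hmat A h)ᴴ * Hmat A h).det ≠ 0) :
    ContinuousAt (zfSNR A ℓ) h := by
  have hgram : Continuous fun h => (Hmat A h)ᴴ * Hmat A h :=
    (continuous_Hmat A).matrix_conjTranspose.matrix_mul (continuous_Hmat A)
  have hinv : ContinuousAt (fun h => ((Hmat A h)ᴴ * Hmat A h)⁻¹) h :=
    (continuousAt_matrix_inv _
      (NormedRing.inverse_continuousAt (Units.mk0 _ hdet))).comp
      (f := fun h => (Hmat A h)ᴴ * Hmat A h) hgram.continuousAt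
  exact (Complex.continuous_re.continuousAt.comp
    ((continuous_apply_apply ℓ ℓ).continuousAt.comp hinv)).inv₀
    (re_inv_gram_Hmat_pos A ℓ hdet).ne'

theorem exists_pos_mul_sq_norm_le_zfSNR [NeZero M]
    (hns : ∀ h : Fin M → ℂ, h ≠ 0 → ((Hmat A h)ᴴ * Hmat A h).det ≠ 0) :
    ∃ c, 0 < c ∧ ∀ h : Fin M → ℂ, h ≠ 0 → c * ‖h‖ ^ 2 ≤ zfSNR A ℓ h :=
  exists_pos_mul_norm_pow_le_of_homogeneous
    (fun h hh => (continuousAt_zfSNR A ℓ (hns h hh)).continuousWithinAt)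
    (fun h hh => inv_pos.mpr (re_inv_gram_Hmat_pos A ℓ (hns h hh)))
    (fun r hr h hh => zfSNR_smul A ℓ r hr.ne' h (hns h hh))

end zfSNR

theorem integral_exp_neg_mul_mul_le_of_sq_norm_le {ι : Type*} [Fintype ι] [Nonempty ι]
    {Q g : (ι → ℂ) → ℝ} {c K a : ℝ} (hc : 0 < c) (ha : 0 < a)
    (hQ : ∀ᵐ h, c * ‖h‖ ^ 2 ≤ Q h) (hg : ∀ h, 0 ≤ g h ∧ g h ≤ K) :
    ∫ h, Real.exp (-(a * Q h)) * g h ≤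
      K * (Real.pi * Fintype.card ι / (a * c)) ^ Fintype.card ι := by
  set n := Fintype.card ι
  have hn : (0 : ℝ) < n := by exact_mod_cast Fintype.card_pos
  set b := a * c / n
  have hb : 0 < b := by positivity
  have hdom : ∀ᵐ h, Real.exp (-(a * Q h)) * g h ≤ K * Real.exp (-b * ∑ i, ‖h i‖ ^ 2) := by
    filter_upwards [hQ] with h hh
    have hsum : ∑ i, ‖h i‖ ^ 2 ≤ n * ‖h‖ ^ 2 := by
      simpa using Finset.sum_le_sum fun i (_ : i ∈ Finset.univ) =>
        pow_le_pow_left₀ (norm_nonneg _) (norm_le_pi_norm h i) 2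
    have hexp : -(a * Q h) ≤ -b * ∑ i, ‖h i‖ ^ 2 := by
      have : b * ∑ i, ‖h i‖ ^ 2 ≤ a * (c * ‖h‖ ^ 2) := by
        calc b * ∑ i, ‖h i‖ ^ 2 ≤ b * (n * ‖h‖ ^ 2) := by gcongr
          _ = a * (c * ‖h‖ ^ 2) := by simp only [b]; field_simp
      linarith [mul_le_mul_of_nonneg_left hh ha.le]
    rw [mul_comm K]
    exact mul_le_mul (Real.exp_le_exp.mpr hexp) (hg h).2 (hg h).1 (Real.exp_pos _).le
  calc ∫ h, Real.exp (-(a * Q h)) * g h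
      ≤ ∫ h : ι → ℂ, K * Real.exp (-b * ∑ i, ‖h i‖ ^ 2) :=
        integral_mono_of_nonneg (.of_forall fun h => mul_nonneg (Real.exp_pos _).le (hg h).1)
          ((integrable_exp_neg_mul_sum_sq_norm hb).const_mul K) hdom
    _ = K * (Real.pi * n / (a * c)) ^ n := by
        rw [integral_const_mul, integral_exp_neg_mul_sum_sq_norm hb]
        congr 2
        simp only [b]
        field_simp

theorem stmt13_general (N M L : ℕ) (hM : 0 < M)
    (A : Fin L → Matrix (Fin N) (Fin M) ℂ)
    (hns : ∀ h : Fin M → ℂ, h ≠ 0 → ((Hmat A h)ᴴ * Hmat A h).det ≠ 0)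
    (S : Matrix (Fin M) (Fin M) ℂ) (hS : S.PosDef) (ℓ : Fin L)
    (q : (Fin M → ℂ) → ℝ)
    (hq : ∀ h : Fin M → ℂ, h ≠ 0 →
      q h = ((((Hmat A h)ᴴ * Hmat A h)⁻¹ ℓ ℓ).re)⁻¹) :
    ∃ C : ℝ, 0 < C ∧ ∀ a : ℝ, 0 < a →
      (∫ h : Fin M → ℂ,
          Real.exp (-(a * q h)) *
            ((Real.pi ^ M * S.det.re)⁻¹ *
              Real.exp (-(((fun i => star (h i)) ⬝ᵥ (S⁻¹ *ᵥ h)).re)))) ≤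
        C * (a ^ M)⁻¹ := by
  have : NeZero M := ⟨hM.ne'⟩
  obtain ⟨c, hc, hcq⟩ := exists_pos_mul_sq_norm_le_zfSNR A ℓ hns
  have hdet : 0 < S.det.re := (Complex.pos_iff.mp hS.det_pos).1
  set K := (Real.pi ^ M * S.det.re)⁻¹
  have hK : 0 < K := by positivity
  refine ⟨K * (Real.pi * M / c) ^ M, by positivity, fun a ha => ?_⟩
  have hQ : ∀ᵐ h : Fin M → ℂ, c * ‖h‖ ^ 2 ≤ q h := by
    filter_upwards [compl_mem_ae_iff.mpr (measure_singleton (0 : Fin M → ℂ))] with h hh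
    rw [hq h hh]
    exact hcq h hh
  have hgauss : ∀ h : Fin M → ℂ,
      Real.exp (-(((fun i => star (h i)) ⬝ᵥ (S⁻¹ *ᵥ h)).re)) ≤ 1 := fun h =>
    Real.exp_le_one_iff.mpr (neg_nonpos.mpr (hS.inv.posSemidef.re_dotProduct_nonneg h))
  calc _ ≤ K * (Real.pi * Fintype.card (Fin M) / (a * c)) ^ Fintype.card (Fin M) :=
        integral_exp_neg_mul_mul_le_of_sq_norm_le hc ha hQ fun h =>
          ⟨by positivity, mul_le_of_le_one_right hK.le (hgauss h)⟩
    _ = K * (Real.pi * M / c) ^ M * (a ^ M)⁻¹ := by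
        rw [Fintype.card_fin, mul_assoc, ← inv_pow, ← mul_pow]
        congr 2
        field_simp

/-- Suppose `H(h)ᴴ H(h)` is nonsingular for every nonzero `h`, `Σ` is
Hermitian positive definite, and for `h ≠ 0` let
`q(h) = ([(H(h)ᴴH(h))⁻¹]_{ℓℓ})⁻¹ > 0` (defined arbitrarily at `h = 0`). Then there is a
constant `C > 0` such that for every `a > 0`,
`∫ exp(−a q(h)) (π^M det Σ)⁻¹ exp(−hᴴΣ⁻¹h) dh ≤ C a^{−M}`. -/
theorem stmt13 (N M L : ℕ) (hN : 0 < N) (hM : 0 < M) (hL : 0 < L)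
    (A : Fin L → Matrix (Fin N) (Fin M) ℂ)
    (hns : ∀ h : Fin M → ℂ, h ≠ 0 → ((Hmat A h)ᴴ * Hmat A h).det ≠ 0)
    (S : Matrix (Fin M) (Fin M) ℂ) (hS : S.PosDef) (ℓ : Fin L)
    (q : (Fin M → ℂ) → ℝ)
    (hq : ∀ h : Fin M → ℂ, h ≠ 0 →
      q h = ((((Hmat A h)ᴴ * Hmat A h)⁻¹ ℓ ℓ).re)⁻¹) :
    ∃ C : ℝ, 0 < C ∧ ∀ a : ℝ, 0 < a →
      (∫ h : Fin M → ℂ,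
          Real.exp (-(a * q h)) *
            ((Real.pi ^ M * S.det.re)⁻¹ *
              Real.exp (-(((fun i => star (h i)) ⬝ᵥ (S⁻¹ *ᵥ h)).re)))) ≤
        C * (a ^ M)⁻¹ :=
  stmt13_general N M L hM A hns S hS ℓ q hq
end
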